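/- Suppose the OSC holds and the nonnegative matrix B(q,γ,l) is irreducible. Let q ∈ ℝ, let β(q) be the unique real number with ρ(A(q,β(q))) = 1 and let γ(q) be the unique real number with ρ(B(q,γ(q),l)) = 1. Then γ(q) < β(q). -/

import Mathlib

open MeasureTheory Metric Set Filter Topology Asymptotics

noncomputable section

/-- Euclidean space `ℝ^m`. -/
abbrev Euc (m : ℕ) : Type := EuclideanSpace ℝ (Fin m)

/-- The topological support of a measure. -/
def mSupport {X : Type} [TopologicalSpace X] [MeasurableSpace X]
    (μ : Measure X) : Set X :=
  {x | ∀ U : Set X, IsOpen U → x ∈ U → 0 < μ U}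

/-- The probability weight of a finite path (product of its edge weights). -/
def pathProb {E : Type} (w : E → ℝ) (p : List E) : ℝ := (p.map w).prod

/-- `f` is a subpath of `g`. -/
def IsSubpath {E : Type} (f g : List E) : Prop := ∃ s t : List E, g = s ++ f ++ t

/-- The distance between two sets. -/
def setDist {X : Type} [PseudoMetricSpace X] (A B : Set X) : ℝ :=
  sInf (Set.image2 dist A B)

/-- The `q`-th packing moment `M_u^q(A,r)` of a measure `μ` on `A` at scale `r`:
the supremum of `∑_{x∈D} μ(B̄(x,r))^q` over `r`-separated finite subsets `D ⊆ A`. -/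
def packMoment {m : ℕ} (μ : Measure (Euc m)) (q : ℝ) (A : Set (Euc m)) (r : ℝ) : ℝ :=
  sSup {s : ℝ | ∃ D : Finset (Euc m), ↑D ⊆ A ∧
    (∀ x ∈ D, ∀ y ∈ D, x ≠ y → 2 * r < dist x y) ∧
    s = ∑ x ∈ D, (μ (Metric.closedBall x r)).toReal ^ q}

/-- The spectral radius of a real square matrix (via its complex spectrum). -/
def specRad {n : Type} [Fintype n] [DecidableEq n] (M : Matrix n n ℝ) : ENNReal :=
  spectralRadius ℂ (M.map (algebraMap ℝ ℂ))

/-- A matrix is irreducible if some power has a positive `ij` entry, for every `i j`. -/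
def MatIrreducible {n : Type} [Fintype n] [DecidableEq n] (M : Matrix n n ℝ) : Prop :=
  ∀ i j : n, ∃ k : ℕ, 0 < (M ^ k) i j

/-- A self-similar directed-graph IFS on `ℝ^m`: a finite strongly connected directed
multigraph with at least two edges out of each vertex, each edge carrying a contracting
similarity of `ℝ^m`. -/
structure GIFS (m : ℕ) (V E : Type) [Fintype V] [Fintype E] where
  src : E → V
  dst : E → V
  ratio : E → ℝ
  ratio_pos : ∀ e, 0 < ratio e
  ratio_lt_one : ∀ e, ratio e < 1
  map : E → Euc m → Euc m
  map_similarity : ∀ e x y, dist (map e x) (map e y) = ratio e * dist x y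
  two_edges : ∀ u : V, ∃ e f : E, e ≠ f ∧ src e = u ∧ src f = u
  strongly_connected : ∀ u v : V, ∃ p : List E, p ≠ [] ∧
    p.Chain' (fun a b => dst a = src b) ∧ p.head?.map src = some u ∧
    p.getLast?.map dst = some v

namespace GIFS

variable {m : ℕ} {V E : Type} [Fintype V] [Fintype E] (G : GIFS m V E)

/-- `p` is a directed path (consecutive edges match up). -/
def IsPath (p : List E) : Prop := p.Chain' (fun a b => G.dst a = G.src b)

/-- `p` is a nonempty directed path from `u` to `v`. -/
def IsPathFrom (u v : V) (p : List E) : Prop :=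
  p ≠ [] ∧ G.IsPath p ∧ p.head?.map G.src = some u ∧ p.getLast?.map G.dst = some v

/-- The contraction `S_{e₁} ∘ ⋯ ∘ S_{e_k}` along a path. -/
def pathMap (p : List E) : Euc m → Euc m := p.foldr (fun e f => G.map e ∘ f) id

/-- The contraction ratio along a path. -/
def pathRatio (p : List E) : ℝ := (p.map G.ratio).prod

/-- The terminal vertex of a path (with default `u` for the empty path). -/
def pathDst (u : V) (p : List E) : V := (p.getLast?.map G.dst).getD u

/-- `(F u)_{u ∈ V}` is the attractor: the unique list of nonempty compact sets with
`F u = ⋃_{e ∈ E_u¹} S_e(F_{t(e)})`. -/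
def IsAttractor (F : V → Set (Euc m)) : Prop :=
  (∀ u, (F u).Nonempty) ∧ (∀ u, IsCompact (F u)) ∧
  (∀ u, F u = ⋃ e ∈ {e : E | G.src e = u}, G.map e '' F (G.dst e))

/-- Probability weights on the edges: each in `(0,1)`, summing to `1` at each vertex. -/
def IsProbWeights (w : E → ℝ) : Prop :=
  (∀ e, w e ∈ Set.Ioo (0 : ℝ) 1) ∧
  (∀ u : V, ∑ e : E, Set.indicator {e : E | G.src e = u} w e = 1)

/-- `(μ u)_{u ∈ V}` are the self-similar measures: Borel probability measures with
`μ_u(A) = ∑_{e ∈ E_u¹} p_e μ_{t(e)}(S_e⁻¹(A))` and `supp μ_u = F u`. -/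
def IsSelfSimilarMeasures (w : E → ℝ) (F : V → Set (Euc m)) (μ : V → Measure (Euc m)) : Prop :=
  (∀ u, IsProbabilityMeasure (μ u)) ∧
  (∀ u (A : Set (Euc m)), MeasurableSet A →
    μ u A = ∑ e : E, Set.indicator {e : E | G.src e = u}
      (fun e => ENNReal.ofReal (w e) * μ (G.dst e) (G.map e ⁻¹' A)) e) ∧
  (∀ u, mSupport (μ u) = F u)

/-- The strong separation condition. -/
def SSC (F : V → Set (Euc m)) : Prop :=
  ∀ u : V, ∀ e f : E, G.src e = u → G.src f = u → e ≠ f →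
    (G.map e '' F (G.dst e)) ∩ (G.map f '' F (G.dst f)) = ∅

/-- The open set condition with open sets `U`. -/
def OSCWith (U : V → Set (Euc m)) : Prop :=
  (∀ u, (U u).Nonempty ∧ IsOpen (U u) ∧ Bornology.IsBounded (U u)) ∧
  (∀ e : E, G.map e '' U (G.dst e) ⊆ U (G.src e)) ∧
  (∀ u : V, ∀ e f : E, G.src e = u → G.src f = u → e ≠ f →
    (G.map e '' U (G.dst e)) ∩ (G.map f '' U (G.dst f)) = ∅)

/-- The open set condition. -/
def OSC : Prop := ∃ U : V → Set (Euc m), G.OSCWith U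

variable [DecidableEq V]

/-- The matrix `A(q,β)` with `uv` entry `∑_{e ∈ E¹_{uv}} p_e^q r_e^β`. -/
def matA (w : E → ℝ) (q β : ℝ) : Matrix V V ℝ :=
  Matrix.of fun u v => ∑ e : E,
    Set.indicator {e : E | G.src e = u ∧ G.dst e = v}
      (fun e => w e ^ q * G.ratio e ^ β) e

/-- The matrix `B(q,γ,l)` with `uv` entry `∑_{e ∈ E^l_{uv}, e ≠ l_u} p_e^q r_e^γ`. -/
def matB (w : E → ℝ) (q γ : ℝ) (l : ℕ) (lu : V → List E) : Matrix V V ℝ :=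
  Matrix.of fun u v => ∑ p : List.Vector E l,
    Set.indicator {p : List.Vector E l | G.IsPathFrom u v p.toList ∧ p.toList ≠ lu u}
      (fun p => pathProb w p.toList ^ q * G.pathRatio p.toList ^ γ) p

/-- The matrix of measures `P` with `uv` entry `∑_{e ∈ E¹_{uv}} p_e^q r_e^{β} δ_{ln(1/r_e)}`. -/
def matP (w : E → ℝ) (q β : ℝ) : V → V → Measure ℝ :=
  fun u v => ∑ e : E,
    (Set.indicator {e : E | G.src e = u ∧ G.dst e = v}
      (fun e => ENNReal.ofReal (w e ^ q * G.ratio e ^ β)) e) •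
      Measure.dirac (Real.log ((G.ratio e)⁻¹))

end GIFS

/-- `P` is a lattice matrix of measures with span `lam`. -/
def IsLatticeMatrix {V : Type} (P : V → V → MeasureTheory.Measure ℝ) (lam : ℝ) : Prop :=
  0 < lam ∧
  ∃ (L : V → V → ℝ) (b : V → V → ℝ),
    (∀ u v : V, 0 < L u v) ∧
    -- (a) each diagonal support generates the group `L u u • ℤ`
    (∀ u : V, AddSubgroup.closure (mSupport (P u u)) = AddSubgroup.zmultiples (L u u)) ∧
    -- (b) off-diagonal supports lie in `b u v + L u v • ℤ`, with `L u v` maximal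
    (∀ u v : V, u ≠ v →
      (mSupport (P u v) ⊆ {x : ℝ | ∃ n : ℤ, x = b u v + n * L u v}) ∧
      (∀ L' : ℝ, 0 < L' →
        (∃ b' : ℝ, mSupport (P u v) ⊆ {x : ℝ | ∃ n : ℤ, x = b' + n * L'}) → L' ≤ L u v)) ∧
    -- (c) the numbers `L u v` generate the group `lam • ℤ`
    (AddSubgroup.closure {x : ℝ | ∃ u v : V, x = L u v} = AddSubgroup.zmultiples lam) ∧
    -- (d) `supp P_uv + supp P_vw − supp P_uw ⊆ lam • ℤ`
    (∀ u v z : V, ∀ a ∈ mSupport (P u v), ∀ a' ∈ mSupport (P v z), ∀ a'' ∈ mSupport (P u z),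
      ∃ n : ℤ, a + a' - a'' = n * lam)

/-! Suppose `β ≤ γ`. Taking absolute values of an eigenvector for an eigenvalue of maximal
modulus of the irreducible matrix `B = B(q,γ,l)`, and smoothing it by powers of `B`, gives
`x > 0` with `x ≤ B x`. Every path counted in `B` is counted in `A(q,γ)^l`, which moreover
counts the paths `l_u`; hence `x < A(q,γ)^l x` coordinatewise, and so `c x ≤ A(q,γ)^l x` for
some `c > 1`. As all `r_e < 1`, `A(q,γ) ≤ A(q,β)` entrywise, so also `c x ≤ A(q,β)^l x`, and
Gelfand's formula yields `ρ(A(q,β))^l ≥ c > 1`, contradicting `ρ(A(q,β)) = 1`. -/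

open Matrix
open scoped ENNReal

theorem spectrum.spectralRadius_pow_eq {A : Type*} [NormedRing A] [NormedAlgebra ℂ A]
    [CompleteSpace A] [Nontrivial A] (a : A) (k : ℕ) :
    spectralRadius ℂ (a ^ k) = spectralRadius ℂ a ^ k := by
  refine le_antisymm ?_ (spectrum.spectralRadius_pow_le' a k)
  rw [spectralRadius, spectrum.map_pow]
  refine iSup₂_le ?_
  rintro - ⟨z, hz, rfl⟩
  rw [nnnorm_pow, ENNReal.coe_pow]
  exact pow_le_pow_left₀ zero_le (le_iSup₂ (α := ℝ≥0∞) z hz) k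

theorem Finite.exists_one_lt_forall_mul_le {ι : Type*} [Finite ι] {a b : ι → ℝ}
    (h : ∀ i, a i < b i) : ∃ c > 1, ∀ i, c * a i ≤ b i := by
  have hev : ∀ᶠ c in 𝓝[>] (1 : ℝ), ∀ i, c * a i ≤ b i := by
    refine eventually_all.2 fun i => nhdsWithin_le_nhds ?_
    have : Tendsto (fun c : ℝ => c * a i) (𝓝 1) (𝓝 (1 * a i)) :=
      tendsto_id.mul_const (a i)
    rw [one_mul] at this
    exact (this.eventually (gt_mem_nhds (h i))).mono fun _ => le_of_lt
  obtain ⟨c, hc, hc1⟩ := (hev.and self_mem_nhdsWithin).exists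
  exact ⟨c, hc1, hc⟩

namespace Matrix

section Nonneg

variable {n : Type*} [Fintype n] {M N : Matrix n n ℝ}

theorem pow_apply_le_pow_apply [DecidableEq n] (hM : ∀ i j, 0 ≤ M i j)
    (hMN : ∀ i j, M i j ≤ N i j) (k : ℕ) (i j : n) : (M ^ k) i j ≤ (N ^ k) i j := by
  induction k generalizing j with
  | zero => rfl
  | succ k ih =>
    rw [pow_succ, pow_succ, mul_apply, mul_apply]
    exact Finset.sum_le_sum fun l _ =>
      mul_le_mul (ih l) (hMN l j) (hM l j)
        (pow_apply_nonneg (fun i j => (hM i j).trans (hMN i j)) k i l)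

theorem mulVec_apply_le_mulVec_apply (hM : ∀ i j, 0 ≤ M i j) {x y : n → ℝ}
    (hxy : ∀ j, x j ≤ y j) (i : n) : (M *ᵥ x) i ≤ (M *ᵥ y) i :=
  Finset.sum_le_sum fun j _ => mul_le_mul_of_nonneg_left (hxy j) (hM i j)

theorem mulVec_apply_le_mulVec_apply_of_le {x : n → ℝ} {i : n} (hMN : ∀ j, M i j ≤ N i j)
    (hx : ∀ j, 0 ≤ x j) : (M *ᵥ x) i ≤ (N *ᵥ x) i :=
  Finset.sum_le_sum fun j _ => mul_le_mul_of_nonneg_right (hMN j) (hx j)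

theorem mulVec_apply_lt_mulVec_apply_of_lt {x : n → ℝ} {i j : n} (hMN : ∀ j, M i j ≤ N i j)
    (hj : M i j < N i j) (hx : ∀ j, 0 < x j) : (M *ᵥ x) i < (N *ᵥ x) i :=
  Finset.sum_lt_sum (fun j _ => mul_le_mul_of_nonneg_right (hMN j) (hx j).le)
    ⟨j, Finset.mem_univ j, mul_lt_mul_of_pos_right hj (hx j)⟩

theorem pow_mul_le_pow_mulVec [DecidableEq n] (hM : ∀ i j, 0 ≤ M i j) {x : n → ℝ} {c : ℝ}
    (hc : 0 ≤ c) (hx : ∀ i, c * x i ≤ (M *ᵥ x) i) (k : ℕ) (i : n) :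
    c ^ k * x i ≤ ((M ^ k) *ᵥ x) i := by
  induction k generalizing i with
  | zero => simp
  | succ k ih =>
    calc c ^ (k + 1) * x i = c * (c ^ k * x i) := by ring
      _ ≤ c * ((M ^ k) *ᵥ x) i := mul_le_mul_of_nonneg_left (ih i) hc
      _ = ((M ^ k) *ᵥ (c • x)) i := by rw [mulVec_smul]; rfl
      _ ≤ ((M ^ k) *ᵥ (M *ᵥ x)) i := mulVec_apply_le_mulVec_apply (pow_apply_nonneg hM k) hx i
      _ = ((M ^ (k + 1)) *ᵥ x) i := by rw [pow_succ, mulVec_mulVec]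

end Nonneg

section SpectralRadius

variable {n : Type} [Fintype n] {M : Matrix n n ℝ}

attribute [local instance] Matrix.linftyOpNormedAddCommGroup Matrix.linftyOpNormedRing
  Matrix.linftyOpNormedAlgebra

theorem linfty_opNorm_map_ofReal (N : Matrix n n ℝ) : ‖N.map (algebraMap ℝ ℂ)‖ = ‖N‖ := by
  simp [linfty_opNorm_def]

theorem exists_nonneg_norm_mul_le_mulVec [DecidableEq n] (hM : ∀ i j, 0 ≤ M i j) {z : ℂ}
    (hz : z ∈ spectrum ℂ (M.map (algebraMap ℝ ℂ))) :
    ∃ y : n → ℝ, (∀ i, 0 ≤ y i) ∧ (∃ j, 0 < y j) ∧ ∀ i, ‖z‖ * y i ≤ (M *ᵥ y) i := by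
  rw [← spectrum_toLin', ← Module.End.hasEigenvalue_iff_mem_spectrum] at hz
  obtain ⟨v, hv, hv0⟩ := hz.exists_hasEigenvector
  rw [Module.End.mem_eigenspace_iff, toLin'_apply] at hv
  obtain ⟨j, hj⟩ := Function.ne_iff.1 hv0
  refine ⟨fun i => ‖v i‖, fun i => norm_nonneg _, ⟨j, norm_pos_iff.2 hj⟩, fun i => ?_⟩
  calc ‖z‖ * ‖v i‖ = ‖∑ j, (M i j : ℂ) * v j‖ := by
        rw [← norm_mul, ← smul_eq_mul, ← Pi.smul_apply, ← hv]; rfl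
    _ ≤ ∑ j, ‖(M i j : ℂ) * v j‖ := norm_sum_le _ _
    _ = (M *ᵥ fun i => ‖v i‖) i := by
        simp only [norm_mul, Complex.norm_real, Real.norm_of_nonneg (hM _ _)]; rfl

theorem ofReal_le_specRad_of_mul_le_mulVec [DecidableEq n] [Nonempty n] (hM : ∀ i j, 0 ≤ M i j)
    {x : n → ℝ} (hx : ∀ i, 0 < x i) {c : ℝ} (hc : 0 ≤ c) (hcx : ∀ i, c * x i ≤ (M *ᵥ x) i) :
    ENNReal.ofReal c ≤ specRad M := by
  obtain ⟨i⟩ := ‹Nonempty n›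
  have hxi : x i ≤ ‖x‖ := (Real.le_norm_self _).trans (norm_le_pi_norm x i)
  set α := x i / ‖x‖
  have hα : 0 < α := div_pos (hx i) ((hx i).trans_le hxi)
  have hgrowth (k : ℕ) : c ^ k * α ≤ ‖M.map (algebraMap ℝ ℂ) ^ k‖ := by
    rw [← Matrix.map_pow M (algebraMap ℝ ℂ), linfty_opNorm_map_ofReal, mul_div_assoc',
      div_le_iff₀ ((hx i).trans_le hxi)]
    calc c ^ k * x i ≤ ((M ^ k) *ᵥ x) i := pow_mul_le_pow_mulVec hM hc hcx k i
      _ ≤ ‖(M ^ k) *ᵥ x‖ := (Real.le_norm_self _).trans (norm_le_pi_norm _ i)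
      _ ≤ ‖M ^ k‖ * ‖x‖ := linfty_opNorm_mulVec _ _
  have hlim : Tendsto (fun k : ℕ => ENNReal.ofReal (c * α ^ (1 / k : ℝ))) atTop
      (𝓝 (ENNReal.ofReal c)) := by
    refine ENNReal.tendsto_ofReal ?_
    simpa using tendsto_const_nhds.mul
      ((Real.continuousAt_const_rpow hα.ne').tendsto.comp tendsto_one_div_atTop_nhds_zero_nat)
  refine le_of_tendsto_of_tendsto hlim
    (spectrum.pow_norm_pow_one_div_tendsto_nhds_spectralRadius _) ?_
  filter_upwards [eventually_ne_atTop 0] with k hk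
  refine ENNReal.ofReal_le_ofReal ?_
  calc c * α ^ (1 / k : ℝ) = (c ^ k * α) ^ (1 / k : ℝ) := by
        rw [Real.mul_rpow (pow_nonneg hc k) hα.le, one_div, Real.pow_rpow_inv_natCast hc hk]
    _ ≤ _ := Real.rpow_le_rpow (by positivity) (hgrowth k) (by positivity)

theorem specRad_pow [DecidableEq n] [Nonempty n] (k : ℕ) : specRad (M ^ k) = specRad M ^ k := by
  rw [specRad, specRad, Matrix.map_pow M (algebraMap ℝ ℂ)]
  exact spectrum.spectralRadius_pow_eq _ k

theorem exists_pos_specRad_mul_le_mulVec [DecidableEq n] [Nonempty n] (hM : ∀ i j, 0 ≤ M i j)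
    (hirr : MatIrreducible M) :
    ∃ x : n → ℝ, (∀ i, 0 < x i) ∧ ∀ i, (specRad M).toReal * x i ≤ (M *ᵥ x) i := by
  obtain ⟨z, hz, hzρ⟩ := spectrum.exists_nnnorm_eq_spectralRadius (M.map (algebraMap ℝ ℂ))
  obtain ⟨y, hy, ⟨j, hj⟩, hMy⟩ := exists_nonneg_norm_mul_le_mulVec hM hz
  have hρ : (specRad M).toReal = ‖z‖ := by rw [specRad, ← hzρ]; rfl
  choose k hk using fun i => hirr i j
  -- `P` commutes with `M`, and `P *ᵥ y > 0` because `(M ^ k i) i j > 0` and `y j > 0`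
  set P := ∑ i, M ^ k i
  have hP : ∀ i l, 0 ≤ P i l := fun i l => by
    simp only [P, sum_apply]
    exact Finset.sum_nonneg fun i' _ => pow_apply_nonneg hM _ _ _
  refine ⟨P *ᵥ y, fun i => ?_, fun i => ?_⟩
  · have hMky (i' : n) : ∀ l, 0 ≤ (M ^ k i') i l * y l := fun l =>
      mul_nonneg (pow_apply_nonneg hM _ _ _) (hy l)
    calc 0 < (M ^ k i) i j * y j := mul_pos (hk i) hj
      _ ≤ ((M ^ k i) *ᵥ y) i := Finset.single_le_sum (fun l _ => hMky i l) (Finset.mem_univ j)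
      _ ≤ (P *ᵥ y) i := by
        rw [sum_mulVec, Finset.sum_apply]
        exact Finset.single_le_sum (f := fun i' => ((M ^ k i') *ᵥ y) i)
          (fun i' _ => Finset.sum_nonneg fun l _ => hMky i' l) (Finset.mem_univ i)
  · have hPM : P * M = M * P := by
      simp only [P, Finset.sum_mul, Finset.mul_sum, pow_mul_comm']
    calc (specRad M).toReal * (P *ᵥ y) i = (P *ᵥ (‖z‖ • y)) i := by
          rw [hρ, mulVec_smul]; rfl
      _ ≤ (P *ᵥ (M *ᵥ y)) i := mulVec_apply_le_mulVec_apply hP hMy i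
      _ = (M *ᵥ (P *ᵥ y)) i := by rw [mulVec_mulVec, mulVec_mulVec, hPM]

end SpectralRadius

end Matrix

theorem List.Vector.sum_succ {α M : Type*} [Fintype α] [AddCommMonoid M] {n : ℕ}
    (f : List.Vector α (n + 1) → M) :
    ∑ p, f p = ∑ a, ∑ p : List.Vector α n, f (a ::ᵥ p) := by
  let e : α × List.Vector α n ≃ List.Vector α (n + 1) :=
    ⟨fun x => x.1 ::ᵥ x.2, fun p => (p.head, p.tail), fun x => by simp, cons_head_tail⟩
  rw [← e.sum_comp, Fintype.sum_prod_type]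
  rfl

theorem pathProb_pos {E : Type} {w : E → ℝ} (hw : ∀ e, 0 < w e) (p : List E) :
    0 < pathProb w p :=
  List.prod_pos <| by simpa using fun e _ => hw e

namespace GIFS

variable {m : ℕ} {V E : Type} [Fintype V] [Fintype E] (G : GIFS m V E)

theorem pathRatio_pos (p : List E) : 0 < G.pathRatio p :=
  List.prod_pos <| by simpa using fun e _ => G.ratio_pos e

theorem isPath_iff_isChain (p : List E) :
    G.IsPath p ↔ p.IsChain (fun a b => G.dst a = G.src b) := Iff.rfl

theorem isPathFrom_singleton (u v : V) (e : E) :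
    G.IsPathFrom u v [e] ↔ G.src e = u ∧ G.dst e = v := by
  simp [IsPathFrom, isPath_iff_isChain]

theorem isPathFrom_cons {u v : V} (e : E) {p : List E} (hp : p ≠ []) :
    G.IsPathFrom u v (e :: p) ↔ G.src e = u ∧ G.IsPathFrom (G.dst e) v p := by
  obtain ⟨f, p, rfl⟩ := List.exists_cons_of_ne_nil hp
  simp only [IsPathFrom, isPath_iff_isChain, List.isChain_cons_cons, List.head?_cons,
    List.getLast?_cons_cons, Option.map_some, Option.some.injEq, ne_eq, reduceCtorEq,
    not_false_eq_true, true_and]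
  tauto

def pathWeight (w : E → ℝ) (q γ : ℝ) (p : List E) : ℝ := pathProb w p ^ q * G.pathRatio p ^ γ

variable {G} {w : E → ℝ} {q γ : ℝ}

theorem pathWeight_pos (hw : ∀ e, 0 < w e) (p : List E) : 0 < G.pathWeight w q γ p :=
  mul_pos (Real.rpow_pos_of_pos (pathProb_pos hw p) q)
    (Real.rpow_pos_of_pos (G.pathRatio_pos p) γ)

theorem pathWeight_cons (hw : ∀ e, 0 < w e) (e : E) (p : List E) :
    G.pathWeight w q γ (e :: p) = w e ^ q * G.ratio e ^ γ * G.pathWeight w q γ p := by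
  have hprob : pathProb w (e :: p) = w e * pathProb w p := by simp [pathProb]
  have hratio : G.pathRatio (e :: p) = G.ratio e * G.pathRatio p := by simp [pathRatio]
  rw [pathWeight, pathWeight, hprob, hratio, Real.mul_rpow (hw e).le (pathProb_pos hw p).le,
    Real.mul_rpow (G.ratio_pos e).le (G.pathRatio_pos p).le]
  ring

theorem pathWeight_singleton (e : E) : G.pathWeight w q γ [e] = w e ^ q * G.ratio e ^ γ := by
  simp [pathWeight, pathProb, pathRatio]

theorem matA_nonneg (hw : ∀ e, 0 < w e) (u v : V) : 0 ≤ G.matA w q γ u v :=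
  Finset.sum_nonneg fun e _ => Set.indicator_nonneg (fun e _ =>
    (mul_pos (Real.rpow_pos_of_pos (hw e) q) (Real.rpow_pos_of_pos (G.ratio_pos e) γ)).le) e

theorem matA_le_matA_of_le (hw : ∀ e, 0 < w e) {β : ℝ} (hβγ : β ≤ γ) (u v : V) :
    G.matA w q γ u v ≤ G.matA w q β u v :=
  Finset.sum_le_sum fun e _ => Set.indicator_le_indicator <|
    mul_le_mul_of_nonneg_left
      (Real.rpow_le_rpow_of_exponent_ge (G.ratio_pos e) (G.ratio_lt_one e).le hβγ)
      (Real.rpow_pos_of_pos (hw e) q).le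

theorem matB_nonneg (hw : ∀ e, 0 < w e) (l : ℕ) (lu : V → List E) (u v : V) :
    0 ≤ G.matB w q γ l lu u v :=
  Finset.sum_nonneg fun p _ => Set.indicator_nonneg (fun _ _ => (pathWeight_pos hw _).le) p

variable [DecidableEq V]

theorem matA_mul_apply (N : Matrix V V ℝ) (u v : V) :
    (G.matA w q γ * N) u v =
      ∑ e, if G.src e = u then w e ^ q * G.ratio e ^ γ * N (G.dst e) v else 0 := by
  simp only [Matrix.mul_apply, matA, Matrix.of_apply, Finset.sum_mul, Set.indicator_apply,
    Set.mem_ofPred_eq]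
  rw [Finset.sum_comm]
  refine Finset.sum_congr rfl fun e _ => ?_
  by_cases he : G.src e = u <;> simp [he]

theorem matA_pow_apply (hw : ∀ e, 0 < w e) {l : ℕ} (hl : 0 < l) (u v : V) :
    (G.matA w q γ ^ l) u v = ∑ p : List.Vector E l,
      {p : List.Vector E l | G.IsPathFrom u v p.toList}.indicator
        (fun p => G.pathWeight w q γ p.toList) p := by
  classical
  obtain ⟨l, rfl⟩ := Nat.exists_eq_add_one_of_ne_zero hl.ne'
  clear hl
  induction l generalizing u with
  | zero =>
    rw [zero_add, pow_one, List.Vector.sum_succ]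
    simp [matA, Set.indicator_apply, isPathFrom_singleton, pathWeight_singleton]
  | succ l ih =>
    rw [pow_succ', matA_mul_apply, List.Vector.sum_succ]
    refine Finset.sum_congr rfl fun e _ => ?_
    have hcons (p : List.Vector E (l + 1)) :
        G.IsPathFrom u v (e :: p.toList) ↔ G.src e = u ∧ G.IsPathFrom (G.dst e) v p.toList :=
      G.isPathFrom_cons e (List.ne_nil_of_length_pos (by simp))
    split_ifs with he
    · simp only [ih, Finset.mul_sum, Set.indicator_apply, Set.mem_ofPred_eq,
        List.Vector.toList_cons, hcons, he, true_and, pathWeight_cons hw, mul_ite, mul_zero]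
    · simp [hcons, he]

theorem matB_le_matA_pow (hw : ∀ e, 0 < w e) {l : ℕ} (hl : 0 < l) (lu : V → List E) (u v : V) :
    G.matB w q γ l lu u v ≤ (G.matA w q γ ^ l) u v := by
  rw [matA_pow_apply hw hl]
  exact Finset.sum_le_sum fun p _ => Set.indicator_le_indicator_of_subset (fun _ hp => hp.1)
    (fun p => (pathWeight_pos hw _).le) p

theorem matB_lt_matA_pow (hw : ∀ e, 0 < w e) {l : ℕ} {lu : V → List E} {u v : V}
    (hpath : G.IsPathFrom u v (lu u)) (hlen : (lu u).length = l) :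
    G.matB w q γ l lu u v < (G.matA w q γ ^ l) u v := by
  let p₀ : List.Vector E l := ⟨lu u, hlen⟩
  have hp₀ : p₀ ∈ {p : List.Vector E l | G.IsPathFrom u v p.toList} := hpath
  have hp₀' : p₀ ∉ {p : List.Vector E l | G.IsPathFrom u v p.toList ∧ p.toList ≠ lu u} :=
    fun h => h.2 rfl
  rw [matA_pow_apply hw (hlen ▸ List.length_pos_of_ne_nil hpath.1)]
  refine Finset.sum_lt_sum (fun p _ => Set.indicator_le_indicator_of_subset (fun _ hp => hp.1)
    (fun p => (pathWeight_pos hw _).le) p) ⟨p₀, Finset.mem_univ _, ?_⟩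
  rw [Set.indicator_of_notMem hp₀', Set.indicator_of_mem hp₀]
  exact pathWeight_pos hw _

end GIFS

theorem statement10_general
    {m : ℕ} {V E : Type} [Fintype V] [Fintype E]
    [DecidableEq V] [Nonempty V]
    (G : GIFS m V E) (w : E → ℝ) (hw : G.IsProbWeights w)
    (F : V → Set (Euc m))
    (U : V → Set (Euc m))
    (l : ℕ) (hl : 0 < l) (lu : V → List E)
    (hlu : ∀ u : V, ∃ v : V, G.IsPathFrom u v (lu u) ∧ (lu u).length = l ∧
      G.pathMap (lu u) '' F v ⊆ U u)
    (q β γ : ℝ)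
    (hβ : specRad (G.matA w q β) = 1)
    (hBirr : MatIrreducible (G.matB w q γ l lu))
    (hγ : specRad (G.matB w q γ l lu) = 1) :
    γ < β := by
  by_contra! hβγ
  have hw : ∀ e, 0 < w e := fun e => (hw.1 e).1
  obtain ⟨x, hx, hBx⟩ :=
    Matrix.exists_pos_specRad_mul_le_mulVec (G.matB_nonneg hw l lu) hBirr
  rw [hγ, ENNReal.toReal_one] at hBx
  have hgap (u : V) : x u < ((G.matA w q γ ^ l) *ᵥ x) u := by
    obtain ⟨v, hpath, hlen, -⟩ := hlu u
    calc x u ≤ (G.matB w q γ l lu *ᵥ x) u := by simpa using hBx u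
      _ < _ := Matrix.mulVec_apply_lt_mulVec_apply_of_lt (G.matB_le_matA_pow hw hl lu u)
        (G.matB_lt_matA_pow hw hpath hlen) hx
  obtain ⟨c, hc, hcx⟩ := Finite.exists_one_lt_forall_mul_le hgap
  have hcxβ (u : V) : c * x u ≤ ((G.matA w q β ^ l) *ᵥ x) u :=
    (hcx u).trans <| Matrix.mulVec_apply_le_mulVec_apply_of_le
      (Matrix.pow_apply_le_pow_apply (G.matA_nonneg hw) (G.matA_le_matA_of_le hw hβγ) l u)
      fun v => (hx v).le
  have hρ := Matrix.ofReal_le_specRad_of_mul_le_mulVec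
    (Matrix.pow_apply_nonneg (G.matA_nonneg hw) l) hx (by positivity) hcxβ
  rw [Matrix.specRad_pow, hβ, one_pow, ENNReal.ofReal_le_one] at hρ
  exact hc.not_ge hρ

/-- **Lemma 3.7.** Suppose the OSC holds and `B(q,γ,l)` is irreducible. If `β = β(q)` is
the unique real with `ρ(A(q,β)) = 1` and `γ = γ(q)` the unique real with
`ρ(B(q,γ,l)) = 1`, then `γ < β`. -/
theorem statement10
    {m : ℕ} (hm : 1 ≤ m) {V E : Type} [Fintype V] [Fintype E]
    [DecidableEq V] [DecidableEq E] [Nonempty V] [Nonempty E]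
    (G : GIFS m V E) (w : E → ℝ) (hw : G.IsProbWeights w)
    (F : V → Set (Euc m)) (hF : G.IsAttractor F)
    (U : V → Set (Euc m)) (hU : G.OSCWith U)
    (l : ℕ) (hl : 0 < l) (lu : V → List E)
    (hlu : ∀ u : V, ∃ v : V, G.IsPathFrom u v (lu u) ∧ (lu u).length = l ∧
      G.pathMap (lu u) '' F v ⊆ U u)
    (q β γ : ℝ)
    (hβ : specRad (G.matA w q β) = 1)
    (hBirr : MatIrreducible (G.matB w q γ l lu))
    (hγ : specRad (G.matB w q γ l lu) = 1) :
    γ < β :=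
  statement10_general G w hw F U l hl lu hlu q β γ hβ hBirr hγ
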